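/- arXiv:2103.12860 — 2 statements merged into one kernel-verified Lean document; each statement's English description precedes it below -/
import Mathlib

section
/- Let H be a Hopf algebra with bijective antipode S and A a right H-comodule algebra. The map β(a ⊗ b) = ab₍₀₎ ⊗ b₍₁₎ from A ⊗_{A^{co H}} A to A ⊗ H is bijective (respectively injective, surjective) if and only if the map β'(a ⊗ b) = a₍₀₎b ⊗ a₍₁₎ is bijective (respectively injective, surjective). -/
open TensorProduct

/-- The Galois map `β : A ⊗ A → A ⊗ H`, `β(a ⊗ b) = a b₍₀₎ ⊗ b₍₁₎`. -/
noncomputable def galoisMap (K H A : Type*) [CommRing K] [Ring H] [Algebra K H]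
    [Ring A] [Algebra K A] (ρ : A →ₐ[K] A ⊗[K] H) :
    A ⊗[K] A →ₗ[K] A ⊗[K] H :=
  TensorProduct.map (LinearMap.mul' K A) LinearMap.id ∘ₗ
    (TensorProduct.assoc K A A H).symm.toLinearMap ∘ₗ ρ.toLinearMap.lTensor A

/-- The opposite Galois map `β' : A ⊗ A → A ⊗ H`, `β'(a ⊗ b) = a₍₀₎ b ⊗ a₍₁₎`. -/
noncomputable def galoisMap' (K H A : Type*) [CommRing K] [Ring H] [Algebra K H]
    [Ring A] [Algebra K A] (ρ : A →ₐ[K] A ⊗[K] H) :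
    A ⊗[K] A →ₗ[K] A ⊗[K] H :=
  TensorProduct.map (LinearMap.mul' K A) LinearMap.id ∘ₗ
    (TensorProduct.assoc K A A H).symm.toLinearMap ∘ₗ
    LinearMap.lTensor A (TensorProduct.comm K H A).toLinearMap ∘ₗ
    (TensorProduct.assoc K A H A).toLinearMap ∘ₗ ρ.toLinearMap.rTensor A

/-- The submodule of `A ⊗[K] A` by which one quotients to obtain `A ⊗_{A^{co H}} A`. -/
noncomputable def coinvRelations (K H A : Type*) [CommRing K] [Ring H] [Algebra K H]
    [Ring A] [Algebra K A] (ρ : A →ₐ[K] A ⊗[K] H) : Submodule K (A ⊗[K] A) :=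
  Submodule.span K {z : A ⊗[K] A | ∃ a b c : A,
    ρ b = b ⊗ₜ[K] (1 : H) ∧ z = (a * b) ⊗ₜ[K] c - a ⊗ₜ[K] (b * c)}

/-! With `T (c ⊗ h) = c₍₀₎ ⊗ c₍₁₎ h` one has `β' = T ∘ (id ⊗ S) ∘ β`, because
`T (a b₍₀₎ ⊗ S b₍₁₎) = a₍₀₎ b₍₀₎ ⊗ a₍₁₎ b₍₁₎ S b₍₂₎ = a₍₀₎ b ⊗ a₍₁₎`. The map `T` is invertible,
with inverse `c ⊗ h ↦ c₍₀₎ ⊗ S c₍₁₎ h` by the two antipode axioms, and `id ⊗ S` is invertible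
because `S` is. So `β` and `β'` differ by a linear automorphism of `A ⊗ H`: they have the same
kernel, and one is surjective exactly when the other is. -/

section Twist

variable {K H A : Type*} [CommRing K] [Ring H] [Algebra K H] [Ring A] [Algebra K A]

/-- For `f = ρ` this is the map `T : c ⊗ h ↦ c₍₀₎ ⊗ c₍₁₎ h`. -/
noncomputable def galoisTwist (f : A →ₗ[K] A ⊗[K] H) : A ⊗[K] H →ₗ[K] A ⊗[K] H :=
  (LinearMap.mul' K H).lTensor A ∘ₗ (TensorProduct.assoc K A H H).toLinearMap ∘ₗ f.rTensor H

lemma galoisTwist_tmul (f : A →ₗ[K] A ⊗[K] H) (c : A) (h : H) :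
    galoisTwist f (c ⊗ₜ h) = f c * ((1 : A) ⊗ₜ h) := by
  simp only [galoisTwist, LinearMap.coe_comp, Function.comp_apply, LinearMap.rTensor_tmul,
    LinearEquiv.coe_coe]
  induction f c using TensorProduct.induction_on with
  | zero => simp
  | tmul d k => simp
  | add u v hu hv => simp [add_tmul, hu, hv, add_mul]

lemma galoisTwist_mul_one_tmul (f : A →ₗ[K] A ⊗[K] H) (x : A ⊗[K] H) (h : H) :
    galoisTwist f (x * ((1 : A) ⊗ₜ h)) = galoisTwist f x * ((1 : A) ⊗ₜ h) := by
  induction x using TensorProduct.induction_on with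
  | zero => simp
  | tmul c k => simp [galoisTwist_tmul, mul_assoc]
  | add u v hu hv => simp [add_mul, hu, hv]

lemma galoisTwist_tmul_one_mul (ρ : A →ₐ[K] A ⊗[K] H) (a : A) (x : A ⊗[K] H) :
    galoisTwist ρ.toLinearMap ((a ⊗ₜ (1 : H)) * x) = ρ a * galoisTwist ρ.toLinearMap x := by
  induction x using TensorProduct.induction_on with
  | zero => simp
  | tmul c k => simp [galoisTwist_tmul, mul_assoc]
  | add u v hu hv => simp [mul_add, hu, hv]

lemma galoisTwist_comp_galoisTwist_eq_id {f g : A →ₗ[K] A ⊗[K] H}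
    (hfg : ∀ c, galoisTwist f (g c) = c ⊗ₜ 1) :
    galoisTwist f ∘ₗ galoisTwist g = LinearMap.id := by
  ext c h
  simp [galoisTwist_tmul, galoisTwist_mul_one_tmul, hfg]

lemma galoisTwist_comp_lTensor (f : A →ₗ[K] A ⊗[K] H) (s : H →ₗ[K] H) :
    galoisTwist f ∘ₗ s.lTensor A = (LinearMap.mul' K H ∘ₗ s.lTensor H).lTensor A ∘ₗ
      (TensorProduct.assoc K A H H).toLinearMap ∘ₗ f.rTensor H := by
  refine TensorProduct.ext' fun c h => ?_
  simp only [galoisTwist, LinearMap.coe_comp, Function.comp_apply, LinearMap.lTensor_tmul,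
    LinearMap.rTensor_tmul, LinearEquiv.coe_coe]
  induction f c using TensorProduct.induction_on with
  | zero => simp
  | tmul d k => simp
  | add u v hu hv => simp [add_tmul, hu, hv]

lemma galoisTwist_lTensor_comp (f : A →ₗ[K] A ⊗[K] H) (s : H →ₗ[K] H) :
    galoisTwist (s.lTensor A ∘ₗ f) = (LinearMap.mul' K H ∘ₗ s.rTensor H).lTensor A ∘ₗ
      (TensorProduct.assoc K A H H).toLinearMap ∘ₗ f.rTensor H := by
  refine TensorProduct.ext' fun c h => ?_
  simp only [galoisTwist, LinearMap.coe_comp, Function.comp_apply, LinearMap.rTensor_tmul,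
    LinearEquiv.coe_coe]
  induction f c using TensorProduct.induction_on with
  | zero => simp
  | tmul d k => simp
  | add u v hu hv => simp [add_tmul, hu, hv]

lemma lTensor_tmul_one_mul (s : H →ₗ[K] H) (a : A) (y : A ⊗[K] H) :
    s.lTensor A ((a ⊗ₜ (1 : H)) * y) = (a ⊗ₜ (1 : H)) * s.lTensor A y := by
  induction y using TensorProduct.induction_on with
  | zero => simp
  | tmul c h => simp
  | add u v hu hv => simp [mul_add, hu, hv]

lemma galoisMap_tmul (ρ : A →ₐ[K] A ⊗[K] H) (a b : A) :
    galoisMap K H A ρ (a ⊗ₜ b) = (a ⊗ₜ (1 : H)) * ρ b := by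
  simp only [galoisMap, LinearMap.coe_comp, Function.comp_apply, LinearMap.lTensor_tmul,
    LinearEquiv.coe_coe, AlgHom.toLinearMap_apply]
  induction ρ b using TensorProduct.induction_on with
  | zero => simp
  | tmul c h => simp
  | add u v hu hv => simp [tmul_add, hu, hv, mul_add]

lemma galoisMap'_tmul (ρ : A →ₐ[K] A ⊗[K] H) (a b : A) :
    galoisMap' K H A ρ (a ⊗ₜ b) = ρ a * (b ⊗ₜ (1 : H)) := by
  simp only [galoisMap', LinearMap.coe_comp, Function.comp_apply, LinearMap.rTensor_tmul,
    LinearEquiv.coe_coe, AlgHom.toLinearMap_apply]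
  induction ρ a using TensorProduct.induction_on with
  | zero => simp
  | tmul c h => simp
  | add u v hu hv => simp [add_tmul, hu, hv, add_mul]

end Twist

section Coaction

variable {K H A : Type*} [CommRing K] [Ring H] [Bialgebra K H] [Ring A] [Algebra K A]

structure IsCoaction (ρ : A →ₐ[K] A ⊗[K] H) : Prop where
  coassoc : ∀ a : A, (TensorProduct.assoc K A H H) ((ρ.toLinearMap.rTensor H) (ρ a)) =
    ((Coalgebra.comul (R := K) (A := H)).lTensor A) (ρ a)
  counit : ∀ a : A,
    (TensorProduct.rid K A) (((Coalgebra.counit (R := K) (A := H)).lTensor A) (ρ a)) = a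

lemma IsCoaction.lTensor_counit_apply {ρ : A →ₐ[K] A ⊗[K] H} (hρ : IsCoaction ρ) (a : A) :
    (Coalgebra.counit (R := K) (A := H)).lTensor A (ρ a) = a ⊗ₜ 1 := by
  rw [← TensorProduct.rid_symm_apply]
  exact (TensorProduct.rid K A).eq_symm_apply.mpr (hρ.counit a)

lemma IsCoaction.lTensor_assoc_rTensor_apply {ρ : A →ₐ[K] A ⊗[K] H} (hρ : IsCoaction ρ)
    {u : H ⊗[K] H →ₗ[K] H}
    (hu : u ∘ₗ Coalgebra.comul = Algebra.linearMap K H ∘ₗ Coalgebra.counit) (a : A) :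
    (u.lTensor A ∘ₗ (TensorProduct.assoc K A H H).toLinearMap ∘ₗ
      ρ.toLinearMap.rTensor H) (ρ a) = a ⊗ₜ 1 := by
  rw [LinearMap.comp_apply, LinearMap.comp_apply, LinearEquiv.coe_coe, hρ.coassoc,
    ← LinearMap.comp_apply, ← LinearMap.lTensor_comp, hu, LinearMap.lTensor_comp,
    LinearMap.comp_apply, hρ.lTensor_counit_apply]
  simp

end Coaction

section Hopf

variable {K H A : Type*} [CommRing K] [Ring H] [HopfAlgebra K H] [Ring A] [Algebra K A]
  {ρ : A →ₐ[K] A ⊗[K] H}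

lemma IsCoaction.galoisTwist_lTensor_antipode_apply (hρ : IsCoaction ρ) (a : A) :
    galoisTwist ρ.toLinearMap ((HopfAlgebra.antipode K (A := H)).lTensor A (ρ a)) =
      a ⊗ₜ 1 := by
  rw [← LinearMap.comp_apply, galoisTwist_comp_lTensor]
  exact hρ.lTensor_assoc_rTensor_apply HopfAlgebra.mul_antipode_lTensor_comul a

lemma IsCoaction.galoisTwist_antipode_comp_apply (hρ : IsCoaction ρ) (a : A) :
    galoisTwist ((HopfAlgebra.antipode K (A := H)).lTensor A ∘ₗ ρ.toLinearMap) (ρ a) =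
      a ⊗ₜ 1 := by
  rw [galoisTwist_lTensor_comp]
  exact hρ.lTensor_assoc_rTensor_apply HopfAlgebra.mul_antipode_rTensor_comul a

noncomputable def IsCoaction.galoisTwistEquiv (hρ : IsCoaction ρ) :
    A ⊗[K] H ≃ₗ[K] A ⊗[K] H :=
  .ofLinearMap (galoisTwist ρ.toLinearMap)
    (galoisTwist ((HopfAlgebra.antipode K (A := H)).lTensor A ∘ₗ ρ.toLinearMap))
    (galoisTwist_comp_galoisTwist_eq_id hρ.galoisTwist_lTensor_antipode_apply)
    (galoisTwist_comp_galoisTwist_eq_id hρ.galoisTwist_antipode_comp_apply)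

lemma IsCoaction.galoisMap'_eq_galoisTwist_comp (hρ : IsCoaction ρ) :
    galoisMap' K H A ρ =
      galoisTwist ρ.toLinearMap ∘ₗ (HopfAlgebra.antipode K (A := H)).lTensor A ∘ₗ
        galoisMap K H A ρ := by
  refine TensorProduct.ext' fun a b => ?_
  rw [LinearMap.comp_apply, LinearMap.comp_apply, galoisMap_tmul, galoisMap'_tmul,
    lTensor_tmul_one_mul, galoisTwist_tmul_one_mul, hρ.galoisTwist_lTensor_antipode_apply]

end Hopf

/-- Let `H` be a Hopf algebra with bijective antipode and `A` a right `H`-comodule algebra.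
The Galois map `β(a ⊗ b) = a b₍₀₎ ⊗ b₍₁₎` on `A ⊗_{A^{co H}} A` (realized as the quotient of
`A ⊗[K] A` by the relations `ab ⊗ c = a ⊗ bc` for `b` coinvariant) is bijective
(respectively injective, surjective) if and only if the map `β'(a ⊗ b) = a₍₀₎ b ⊗ a₍₁₎` is
bijective (respectively injective, surjective). -/
theorem galoisMap_bijective_iff (K H A : Type*) [CommRing K] [Ring H] [HopfAlgebra K H]
    [Ring A] [Algebra K A]
    (hS : Function.Bijective (HopfAlgebra.antipode (R := K) (A := H)))
    (ρ : A →ₐ[K] A ⊗[K] H)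
    (hcoassoc : ∀ a : A, (TensorProduct.assoc K A H H) ((ρ.toLinearMap.rTensor H) (ρ a)) =
      ((Coalgebra.comul (R := K) (A := H)).lTensor A) (ρ a))
    (hcounit : ∀ a : A,
      (TensorProduct.rid K A) (((Coalgebra.counit (R := K) (A := H)).lTensor A) (ρ a)) = a) :
    ((LinearMap.ker (galoisMap K H A ρ) = coinvRelations K H A ρ ∧
        LinearMap.range (galoisMap K H A ρ) = ⊤) ↔
      (LinearMap.ker (galoisMap' K H A ρ) = coinvRelations K H A ρ ∧
        LinearMap.range (galoisMap' K H A ρ) = ⊤)) ∧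
    (LinearMap.ker (galoisMap K H A ρ) = coinvRelations K H A ρ ↔
      LinearMap.ker (galoisMap' K H A ρ) = coinvRelations K H A ρ) ∧
    (LinearMap.range (galoisMap K H A ρ) = ⊤ ↔
      LinearMap.range (galoisMap' K H A ρ) = ⊤) := by
  have hρ : IsCoaction ρ := ⟨hcoassoc, hcounit⟩
  let e : A ⊗[K] H ≃ₗ[K] A ⊗[K] H :=
    (LinearEquiv.lTensor A (.ofBijective _ hS)).trans hρ.galoisTwistEquiv
  have hβ' : galoisMap' K H A ρ = e.toLinearMap ∘ₗ galoisMap K H A ρ :=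
    hρ.galoisMap'_eq_galoisTwist_comp
  have hker : LinearMap.ker (galoisMap' K H A ρ) = LinearMap.ker (galoisMap K H A ρ) := by
    rw [hβ', LinearEquiv.ker_comp]
  have hrange : LinearMap.range (galoisMap' K H A ρ) = ⊤ ↔
      LinearMap.range (galoisMap K H A ρ) = ⊤ := by
    rw [LinearMap.range_eq_top, LinearMap.range_eq_top, hβ', LinearMap.coe_comp,
      LinearEquiv.coe_coe, EquivLike.comp_surjective]
  rw [hker, hrange]
  exact ⟨.rfl, .rfl, .rfl⟩
end

section
/- Let R and B be K-algebras and A = R[x; σ, δ] a skew polynomial ring where σ, δ are K-linear. Then A ⊗_K B is isomorphic as a K-algebra to the skew polynomial ring (R ⊗_K B)[z; σ ⊗ id_B, δ ⊗ id_B]. -/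
open TensorProduct

/-- `A` is a skew polynomial ring (Ore extension) `R[x; σ, δ]`: `A` contains `R` (via the
injective ring homomorphism `i`), `δ` is a `σ`-derivation, `A` is a free left `R`-module
with basis `{1, x, x², …}`, and `x r = σ(r) x + δ(r)` for all `r ∈ R`. -/
structure IsSkewPolynomialRing (R A : Type*) [Ring R] [Ring A]
    (σ : R →+* R) (δ : R → R) (i : R →+* A) (x : A) : Prop where
  inj : Function.Injective i
  deriv_add : ∀ r s : R, δ (r + s) = δ r + δ s
  deriv_mul : ∀ r s : R, δ (r * s) = σ r * δ s + δ r * s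
  basis : Function.Bijective fun f : ℕ →₀ R => f.sum fun n r => i r * x ^ n
  comm : ∀ r : R, x * i r = i (σ r) * x + i (δ r)

/-
The basis map `f ↦ ∑ₙ i(fₙ) xⁿ` of `R[x; σ, δ]` is `K`-linear, and tensoring it with `B` gives,
after the identification `(ℕ →₀ R) ⊗ B ≃ (ℕ →₀ R ⊗ B)`, exactly the basis map of `A ⊗ B` with
respect to `i ⊗ id` and `x ⊗ 1`; so bijectivity is preserved. The commutation rule and the
twisted Leibniz rule are checked on pure tensors, where the `B`-factor just comes along.
-/

section BasisMap

variable (K : Type*) {R A : Type*} [CommRing K] [Ring R] [Algebra K R] [Ring A] [Algebra K A]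

noncomputable def skewBasisMap (i : R →ₐ[K] A) (x : A) : (ℕ →₀ R) →ₗ[K] A :=
  Finsupp.lsum K fun n => (LinearMap.mulRight K (x ^ n)).comp i.toLinearMap

variable {K}

theorem skewBasisMap_apply (i : R →ₐ[K] A) (x : A) (f : ℕ →₀ R) :
    skewBasisMap K i x f = f.sum fun n r => i r * x ^ n := by
  simp [skewBasisMap, Finsupp.lsum_apply, Finsupp.sum]

theorem skewBasisMap_single (i : R →ₐ[K] A) (x : A) (n : ℕ) (r : R) :
    skewBasisMap K i x (Finsupp.single n r) = i r * x ^ n := by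
  simp [skewBasisMap]

theorem bijective_skewBasisMap_iff {i : R →ₐ[K] A} {x : A} :
    Function.Bijective (skewBasisMap K i x) ↔
      Function.Bijective fun f : ℕ →₀ R => f.sum fun n r => i r * x ^ n :=
  Iff.of_eq (congrArg _ (funext (skewBasisMap_apply i x)))

theorem injective_of_bijective_skewBasisMap {i : R →ₐ[K] A} {x : A}
    (hb : Function.Bijective (skewBasisMap K i x)) : Function.Injective i := fun r s hrs =>
  Finsupp.single_injective 0 <| hb.injective <| by
    simpa only [skewBasisMap_single, pow_zero, mul_one] using hrs

variable (B : Type*) [Ring B] [Algebra K B]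

theorem skewBasisMap_tensor (i : R →ₐ[K] A) (x : A) :
    skewBasisMap K (Algebra.TensorProduct.map i (AlgHom.id K B)) (x ⊗ₜ[K] (1 : B)) =
      (skewBasisMap K i x).rTensor B ∘ₗ (finsuppLeft K K R B ℕ).symm.toLinearMap := by
  refine Finsupp.lhom_ext fun n t => ?_
  induction t with
  | zero => simp
  | tmul r b =>
    simp [skewBasisMap_single, finsuppLeft_symm_apply_single, Algebra.TensorProduct.tmul_pow]
  | add t₁ t₂ h₁ h₂ => rw [Finsupp.single_add, map_add, map_add, h₁, h₂]

theorem bijective_skewBasisMap_tensor {i : R →ₐ[K] A} {x : A}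
    (hb : Function.Bijective (skewBasisMap K i x)) :
    Function.Bijective
      (skewBasisMap K (Algebra.TensorProduct.map i (AlgHom.id K B)) (x ⊗ₜ[K] (1 : B))) := by
  rw [skewBasisMap_tensor]
  exact ((LinearEquiv.ofBijective _ hb).rTensor B).bijective.comp
    (finsuppLeft K K R B ℕ).symm.bijective

end BasisMap

section Tensor

variable {K R A B : Type*} [CommRing K] [Ring R] [Algebra K R] [Ring A] [Algebra K A]
  [Ring B] [Algebra K B]

theorem rTensor_mul_of_twisted_leibniz (σ : R →ₐ[K] R) (δ : R →ₗ[K] R)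
    (hδ : ∀ r s : R, δ (r * s) = σ r * δ s + δ r * s) (t s : R ⊗[K] B) :
    δ.rTensor B (t * s) =
      Algebra.TensorProduct.map σ (AlgHom.id K B) t * δ.rTensor B s + δ.rTensor B t * s := by
  induction t with
  | zero => simp
  | add t₁ t₂ h₁ h₂ => simp only [add_mul, map_add, h₁, h₂]; abel
  | tmul r b =>
    induction s with
    | zero => simp
    | add s₁ s₂ h₁ h₂ => simp only [mul_add, map_add, h₁, h₂]; abel
    | tmul r' b' => simp [hδ, add_tmul]

theorem tmul_one_mul_map_of_comm (σ : R →ₐ[K] R) (δ : R →ₗ[K] R) (i : R →ₐ[K] A) (x : A)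
    (hx : ∀ r : R, x * i r = i (σ r) * x + i (δ r)) (t : R ⊗[K] B) :
    x ⊗ₜ[K] (1 : B) * Algebra.TensorProduct.map i (AlgHom.id K B) t =
      Algebra.TensorProduct.map i (AlgHom.id K B) (Algebra.TensorProduct.map σ (AlgHom.id K B) t)
        * x ⊗ₜ[K] (1 : B) +
      Algebra.TensorProduct.map i (AlgHom.id K B) (δ.rTensor B t) := by
  induction t with
  | zero => simp
  | add t₁ t₂ h₁ h₂ => simp only [mul_add, add_mul, map_add, h₁, h₂]; abel
  | tmul r b => simp [hx, add_tmul]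

end Tensor

/-- Let `R` and `B` be `K`-algebras and `A = R[x; σ, δ]` a skew polynomial ring over `R`
with `σ` a `K`-algebra endomorphism and `δ` a `K`-linear `σ`-derivation.  Then
`A ⊗[K] B` is (isomorphic as a `K`-algebra to) the skew polynomial ring
`(R ⊗[K] B)[z; σ ⊗ id_B, δ ⊗ id_B]`, via `i ⊗ id_B` and `z = x ⊗ 1`. -/
theorem skewPolynomialRing_tensor (K R B A : Type*) [CommRing K] [Ring R] [Algebra K R]
    [Ring B] [Algebra K B] [Ring A] [Algebra K A]
    (σ : R →ₐ[K] R) (δ : R →ₗ[K] R) (i : R →ₐ[K] A) (x : A)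
    (h : IsSkewPolynomialRing R A σ.toRingHom (⇑δ) i.toRingHom x) :
    IsSkewPolynomialRing (R ⊗[K] B) (A ⊗[K] B)
      (Algebra.TensorProduct.map σ (AlgHom.id K B)).toRingHom
      (⇑(δ.rTensor B))
      (Algebra.TensorProduct.map i (AlgHom.id K B)).toRingHom
      (x ⊗ₜ[K] (1 : B)) := by
  have hbasis := bijective_skewBasisMap_tensor B (bijective_skewBasisMap_iff.mpr h.basis)
  exact ⟨injective_of_bijective_skewBasisMap hbasis, fun r s => map_add _ r s,
    rTensor_mul_of_twisted_leibniz σ δ h.deriv_mul, bijective_skewBasisMap_iff.mp hbasis,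
    tmul_one_mul_map_of_comm σ δ i x h.comm⟩
end
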